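/- Let Λ be a nonzero real number and M a real symmetric positive definite 3×3 matrix with tr(√M) = |Λ|. For a real symmetric 3×3 matrix N let G_M(N) denote the unique real symmetric 3×3 matrix G satisfying G·M^{-1/2} + M^{-1/2}·G = -M⁻¹·N·M⁻¹, and define L(N) := G_M(N - (1/|Λ|)·tr(M^{-1/2}·N)·M). Then L is a self-adjoint, negative semi-definite linear operator on real symmetric 3×3 matrices whose kernel is exactly the span of M: for all symmetric N, N' one has tr(L(N)·N') = tr(N·L(N')), tr(L(N)·N) ≤ 0, and L(N) = 0 if and only if N = c·M for some real c. -/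

import Mathlib

/-!
Write `S = √M`. Multiplying the defining equation of `G` by `M` on both sides turns it into
`M K S + S K M = -P` for `K = G P`. The coefficient in `L` is chosen so that `tr(S⁻¹ P) = 0`
for `P = N - c(N) M`, which forces `tr(L N · M) = 0`; hence
`tr(L N · N') = -tr(K (M K' S + S K' M))` with `K = L N`, `K' = L N'`. This form is symmetric by
cyclicity of the trace, and on the diagonal it equals `2 tr(B Bᴴ)` with `B = S K √S`, which is
nonnegative and vanishes only when `K = 0`.
-/

open Matrix

open scoped ComplexOrder in
/-- The square root of a positive semidefinite matrix, as `Matrix.PosSemidef.sqrt` was defined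
in Mathlib (December 2024); it has since been removed from Mathlib. -/
noncomputable def Matrix.PosSemidef.sqrt {n 𝕜 : Type*} [Fintype n] [RCLike 𝕜] [DecidableEq n]
    {A : Matrix n n 𝕜} (hA : A.PosSemidef) : Matrix n n 𝕜 :=
  (hA.isHermitian.eigenvectorUnitary : Matrix n n 𝕜) *
    diagonal ((↑) ∘ (Real.sqrt ·) ∘ hA.isHermitian.eigenvalues) *
    (star hA.isHermitian.eigenvectorUnitary : Matrix n n 𝕜)

namespace Matrix

open scoped ComplexOrder

section sqrt

variable {n 𝕜 : Type*} [Fintype n] [DecidableEq n] [RCLike 𝕜] {A : Matrix n n 𝕜}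

lemma PosSemidef.posSemidef_sqrt (hA : A.PosSemidef) : hA.sqrt.PosSemidef := by
  have hD : (diagonal ((↑) ∘ (Real.sqrt ·) ∘ hA.isHermitian.eigenvalues) :
      Matrix n n 𝕜).PosSemidef :=
    posSemidef_diagonal_iff.2 fun i => by simp [Real.sqrt_nonneg]
  simpa [sqrt, star_eq_conjTranspose] using hD.mul_mul_conjTranspose_same
    (hA.isHermitian.eigenvectorUnitary : Matrix n n 𝕜)

lemma PosSemidef.sqrt_mul_self (hA : A.PosSemidef) : hA.sqrt * hA.sqrt = A := by
  set U : Matrix n n 𝕜 := (hA.isHermitian.eigenvectorUnitary : Matrix n n 𝕜)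
  set D : Matrix n n 𝕜 := diagonal ((↑) ∘ (Real.sqrt ·) ∘ hA.isHermitian.eigenvalues)
  have hUU : star U * U = 1 := Unitary.star_mul_self_of_mem hA.isHermitian.eigenvectorUnitary.2
  have hDD : D * D = diagonal (RCLike.ofReal ∘ hA.isHermitian.eigenvalues) := by
    simp only [D, diagonal_mul_diagonal, Function.comp_apply, ← RCLike.ofReal_mul,
      Real.mul_self_sqrt (hA.eigenvalues_nonneg _)]
    rfl
  calc hA.sqrt * hA.sqrt = U * (D * (star U * U) * D) * star U := by
        simp only [sqrt, U, D, Matrix.mul_assoc]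
    _ = A := by
        rw [hUU, Matrix.mul_one, hDD]
        simpa using hA.isHermitian.spectral_theorem.symm

lemma PosDef.posDef_sqrt (hA : A.PosDef) : hA.posSemidef.sqrt.PosDef := by
  refine hA.posSemidef.posSemidef_sqrt.posDef_iff_det_ne_zero.2 fun h => hA.det_pos.ne' ?_
  rw [← hA.posSemidef.sqrt_mul_self, det_mul, h, zero_mul]

end sqrt

section sylvester

variable {n R 𝕜 : Type*} [Fintype n]

def sylvesterMap [Semiring R] (A B K : Matrix n n R) : Matrix n n R := A * K * B + B * K * A

lemma trace_mul_mul_mul_mul_comm [CommRing R] (K X K' Y : Matrix n n R) :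
    (K * (X * K' * Y)).trace = (K' * (Y * K * X)).trace :=
  calc (K * (X * K' * Y)).trace = ((K * X) * (K' * Y)).trace := by simp only [Matrix.mul_assoc]
    _ = ((K' * Y) * (K * X)).trace := trace_mul_comm _ _
    _ = (K' * (Y * K * X)).trace := by simp only [Matrix.mul_assoc]

lemma trace_mul_sylvesterMap_comm [CommRing R] (A B K K' : Matrix n n R) :
    (K * sylvesterMap A B K').trace = (K' * sylvesterMap A B K).trace := by
  simp only [sylvesterMap, Matrix.mul_add, trace_add, trace_mul_mul_mul_mul_comm K _ K']
  exact add_comm _ _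

variable [DecidableEq n] [RCLike 𝕜] {S M K : Matrix n n 𝕜}

lemma trace_mul_sylvesterMap_self (hS : S.PosSemidef) (hSS : S * S = M) (hK : K.IsHermitian) :
    (K * sylvesterMap M S K).trace =
      2 * ((S * K * hS.sqrt) * (S * K * hS.sqrt)ᴴ).trace := by
  have hB : (S * K * hS.sqrt) * (S * K * hS.sqrt)ᴴ = S * K * S * K * S := by
    simp only [conjTranspose_mul, hS.posSemidef_sqrt.isHermitian.eq, hK.eq, hS.isHermitian.eq]
    rw [show S * K * hS.sqrt * (hS.sqrt * (K * S)) = S * K * (hS.sqrt * hS.sqrt) * (K * S) by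
      simp only [Matrix.mul_assoc], hS.sqrt_mul_self]
    simp only [Matrix.mul_assoc]
  rw [hB, ← hSS, sylvesterMap, Matrix.mul_add, trace_add, two_mul]
  congr 1
  · rw [show K * (S * S * K * S) = (K * S) * (S * K * S) by simp only [Matrix.mul_assoc],
      trace_mul_comm]
    simp only [Matrix.mul_assoc]
  · rw [show K * (S * K * (S * S)) = (K * S * K * S) * S by simp only [Matrix.mul_assoc],
      trace_mul_comm]
    simp only [Matrix.mul_assoc]

lemma trace_mul_sylvesterMap_self_nonneg (hS : S.PosSemidef) (hSS : S * S = M)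
    (hK : K.IsHermitian) : 0 ≤ (K * sylvesterMap M S K).trace := by
  rw [trace_mul_sylvesterMap_self hS hSS hK]
  exact mul_nonneg zero_le_two (posSemidef_self_mul_conjTranspose _).trace_nonneg

lemma eq_zero_of_trace_mul_sylvesterMap_self_eq_zero (hS : S.PosDef) (hSS : S * S = M)
    (hK : K.IsHermitian) (h : (K * sylvesterMap M S K).trace = 0) : K = 0 := by
  rw [trace_mul_sylvesterMap_self hS.posSemidef hSS hK, mul_eq_zero,
    trace_mul_conjTranspose_self_eq_zero_iff] at h
  have hSKS : S * K * S = 0 := by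
    simpa [Matrix.mul_assoc, hS.posSemidef.sqrt_mul_self] using
      congrArg (· * hS.posSemidef.sqrt) (h.resolve_left two_ne_zero)
  exact hS.isUnit.mul_right_eq_zero.1 (hS.isUnit.mul_left_eq_zero.1 hSKS)

end sylvester

section equation

variable {n R : Type*} [Fintype n] [DecidableEq n] {S M K P : Matrix n n R}

lemma sylvesterMap_eq_neg_of_mul_inv_add_inv_mul [CommRing R] (hS : IsUnit S.det)
    (hSS : S * S = M) (h : K * S⁻¹ + S⁻¹ * K = -(M⁻¹ * P * M⁻¹)) : sylvesterMap M S K = -P := by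
  have hM : IsUnit M.det := hSS ▸ (det_mul S S).symm ▸ hS.mul hS
  have hMS : M * S⁻¹ = S := by rw [← hSS, mul_nonsing_inv_cancel_right (A := S) _ hS]
  have hSM : S⁻¹ * M = S := by rw [← hSS, nonsing_inv_mul_cancel_left (A := S) _ hS]
  calc sylvesterMap M S K = M * K * (S⁻¹ * M) + M * S⁻¹ * K * M := by rw [hSM, hMS]; rfl
    _ = M * (K * S⁻¹ + S⁻¹ * K) * M := by noncomm_ring
    _ = -((M * M⁻¹) * P * (M⁻¹ * M)) := by rw [h]; noncomm_ring
    _ = -P := by rw [mul_nonsing_inv _ hM, nonsing_inv_mul _ hM, Matrix.one_mul, Matrix.mul_one]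

lemma trace_mul_eq_zero_of_sylvesterMap_eq_neg [Field R] [CharZero R] (hS : IsUnit S.det)
    (hSS : S * S = M) (hK : sylvesterMap M S K = -P) (hP : (S⁻¹ * P).trace = 0) :
    (K * M).trace = 0 := by
  have h2 : (S⁻¹ * sylvesterMap M S K).trace = 2 * (K * M).trace := by
    rw [sylvesterMap, Matrix.mul_add, trace_add, ← hSS,
      show S⁻¹ * (S * S * K * S) = (S⁻¹ * S) * (S * K * S) by simp only [Matrix.mul_assoc],
      show S⁻¹ * (S * K * (S * S)) = (S⁻¹ * S) * (K * (S * S)) by simp only [Matrix.mul_assoc],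
      nonsing_inv_mul _ hS, Matrix.one_mul, Matrix.one_mul, trace_mul_comm (S * K) S,
      trace_mul_comm K (S * S), ← Matrix.mul_assoc, two_mul]
  rw [hK, Matrix.mul_neg, trace_neg, hP, neg_zero] at h2
  exact (mul_eq_zero.1 h2.symm).resolve_left two_ne_zero

lemma trace_mul_eq_neg_trace_mul_sylvesterMap [Field R] [CharZero R] {K' N' : Matrix n n R}
    {a : R} (hS : IsUnit S.det) (hSS : S * S = M) (hK : sylvesterMap M S K = -P)
    (hP : (S⁻¹ * P).trace = 0) (hK' : sylvesterMap M S K' = -(N' - a • M)) :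
    (K * N').trace = -(K * sylvesterMap M S K').trace := by
  rw [hK', Matrix.mul_neg, trace_neg, neg_neg, Matrix.mul_sub, trace_sub, Matrix.mul_smul,
    trace_smul, trace_mul_eq_zero_of_sylvesterMap_eq_neg hS hSS hK hP, smul_zero, sub_zero]

end equation

end Matrix

/-- Lemma 5.8 of the paper, `L_semi-definite`.  Let `Λ ≠ 0`
and `M` real symmetric positive definite (3×3) with `tr(√M) = |Λ|`.  For
symmetric `N`, `G N` denotes the unique symmetric solution of
`G·M^{-1/2} + M^{-1/2}·G = -M⁻¹·N·M⁻¹` (hypothesis `hG`), and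
`L N := G (N - (1/|Λ|)·tr(M^{-1/2}·N)·M)`.  Then `L` is self-adjoint and
negative semi-definite for the trace pairing, with kernel exactly the span
of `M`. -/
theorem stmt_4 (Λ : ℝ) (hΛ : Λ ≠ 0) (M : Matrix (Fin 3) (Fin 3) ℝ) (hM : M.PosDef)
    (htr : hM.posSemidef.sqrt.trace = |Λ|)
    (G : Matrix (Fin 3) (Fin 3) ℝ → Matrix (Fin 3) (Fin 3) ℝ)
    (hG : ∀ N : Matrix (Fin 3) (Fin 3) ℝ, N.IsHermitian →
      (G N).IsHermitian ∧
      G N * (hM.posSemidef.sqrt)⁻¹ + (hM.posSemidef.sqrt)⁻¹ * G N = -(M⁻¹ * N * M⁻¹))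
    (L : Matrix (Fin 3) (Fin 3) ℝ → Matrix (Fin 3) (Fin 3) ℝ)
    (hL : ∀ N : Matrix (Fin 3) (Fin 3) ℝ,
      L N = G (N - ((1 / |Λ|) * ((hM.posSemidef.sqrt)⁻¹ * N).trace) • M)) :
    (∀ N N' : Matrix (Fin 3) (Fin 3) ℝ, N.IsHermitian → N'.IsHermitian →
        (L N * N').trace = (N * L N').trace) ∧
    (∀ N : Matrix (Fin 3) (Fin 3) ℝ, N.IsHermitian → (L N * N).trace ≤ 0) ∧
    (∀ N : Matrix (Fin 3) (Fin 3) ℝ, N.IsHermitian →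
        (L N = 0 ↔ ∃ c : ℝ, N = c • M)) := by
  set S := hM.posSemidef.sqrt
  have hS : S.PosDef := hM.posDef_sqrt
  have hSS : S * S = M := hM.posSemidef.sqrt_mul_self
  have hSdet : IsUnit S.det := (isUnit_iff_isUnit_det S).1 hS.isUnit
  clear_value S
  set c : Matrix (Fin 3) (Fin 3) ℝ → ℝ := fun N => 1 / |Λ| * (S⁻¹ * N).trace
  have hSM : (S⁻¹ * M).trace = |Λ| := by
    rw [← hSS, nonsing_inv_mul_cancel_left (A := S) _ hSdet, htr]
  have hc_proj (N : Matrix (Fin 3) (Fin 3) ℝ) : (S⁻¹ * (N - c N • M)).trace = 0 := by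
    rw [Matrix.mul_sub, trace_sub, Matrix.mul_smul, trace_smul, hSM, smul_eq_mul, sub_eq_zero]
    simp only [c]
    field_simp [abs_ne_zero.2 hΛ]
  have hc_smul (c₀ : ℝ) : c (c₀ • M) = c₀ := by
    simp only [c, Matrix.mul_smul, trace_smul, hSM, smul_eq_mul]
    field_simp [abs_ne_zero.2 hΛ]
  have hL_sylv (N : Matrix (Fin 3) (Fin 3) ℝ) (hN : N.IsHermitian) :
      (L N).IsHermitian ∧ sylvesterMap M S (L N) = -(N - c N • M) := by
    obtain ⟨hGh, hGeq⟩ := hG _ (hN.sub (hM.isHermitian.smul (IsSelfAdjoint.all (c N))))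
    rw [← hL] at hGh hGeq
    exact ⟨hGh, sylvesterMap_eq_neg_of_mul_inv_add_inv_mul hSdet hSS hGeq⟩
  have hL_pair (N N' : Matrix (Fin 3) (Fin 3) ℝ) (hN : N.IsHermitian) (hN' : N'.IsHermitian) :
      (L N * N').trace = -(L N * sylvesterMap M S (L N')).trace :=
    trace_mul_eq_neg_trace_mul_sylvesterMap hSdet hSS (hL_sylv N hN).2 (hc_proj N)
      (hL_sylv N' hN').2
  refine ⟨fun N N' hN hN' => ?_, fun N hN => ?_, fun N hN => ⟨fun h0 => ⟨c N, ?_⟩, ?_⟩⟩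
  · rw [hL_pair N N' hN hN', trace_mul_comm N, hL_pair N' N hN' hN, trace_mul_sylvesterMap_comm]
  · rw [hL_pair N N hN hN, neg_nonpos]
    exact trace_mul_sylvesterMap_self_nonneg hS.posSemidef hSS (hL_sylv N hN).1
  · have h := (hL_sylv N hN).2
    simp only [h0, sylvesterMap, Matrix.mul_zero, Matrix.zero_mul, add_zero, zero_eq_neg,
      sub_eq_zero] at h
    exact h
  · rintro ⟨c₀, rfl⟩
    obtain ⟨hK, hKeq⟩ := hL_sylv _ hN
    rw [hc_smul, sub_self, neg_zero] at hKeq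
    refine eq_zero_of_trace_mul_sylvesterMap_self_eq_zero hS hSS hK ?_
    rw [hKeq, Matrix.mul_zero, trace_zero]
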